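/- arXiv:1105.5706 — 7 statements merged into one kernel-verified Lean document; each statement's English description precedes it below -/
import Mathlib

section
/- In a weakly convex metric space (X,d), for every n ≥ 1 and any points x_1, ..., x_n in X, there exists z in X such that for each w in X: (CC1) d(z,w) ≤ max(d(x_1,w), ..., d(x_n,w)), and (CC2) if equality holds in (CC1), then d(x_1,w) = ... = d(x_n,w). -/
/-- A metric space is weakly convex iff for any two points x, y there exists z such
that for each w: (C1) d(z,w) ≤ max(d(x,w), d(y,w)), and (C2) d(x,w) = d(y,w) whenever
d(z,w) = max(d(x,w), d(y,w)). -/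
def WeaklyConvex (X : Type*) [MetricSpace X] : Prop :=
  ∀ x y : X, ∃ z : X, ∀ w : X,
    dist z w ≤ max (dist x w) (dist y w) ∧
    (dist z w = max (dist x w) (dist y w) → dist x w = dist y w)

/-- In a weakly convex metric space, for every n ≥ 1 and any points
x_1, ..., x_n there exists z such that for each w: (CC1) d(z,w) ≤ max_i d(x_i,w),
and (CC2) if equality holds in (CC1) then all the numbers d(x_i,w) are equal. -/
theorem weaklyConvex_finite_combination {X : Type*} [MetricSpace X] (h : WeaklyConvex X)
    (n : ℕ) (x : Fin (n + 1) → X) :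
    ∃ z : X, ∀ w : X,
      (dist z w ≤ ⨆ i, dist (x i) w) ∧
      (dist z w = (⨆ i, dist (x i) w) → ∀ i j, dist (x i) w = dist (x j) w) := by
  induction n with
  | zero =>
    refine ⟨x 0, fun w => ?_⟩
    have hS : (⨆ i : Fin 1, dist (x i) w) = dist (x 0) w := ciSup_unique
    constructor
    · rw [hS]
    · intro _ i j
      fin_cases i <;> fin_cases j <;> rfl
  | succ n ih =>
    obtain ⟨z', hz'⟩ := ih (fun i => x i.castSucc)
    obtain ⟨z, hz⟩ := h z' (x (Fin.last (n + 1)))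
    refine ⟨z, fun w => ?_⟩
    set dlast := dist (x (Fin.last (n + 1))) w with hdlast
    set S' := ⨆ i : Fin (n + 1), dist (x i.castSucc) w with hS'
    set S := ⨆ i : Fin (n + 2), dist (x i) w with hSdef
    have bdd : BddAbove (Set.range fun i : Fin (n + 2) => dist (x i) w) :=
      (Set.finite_range _).bddAbove
    have bdd' : BddAbove (Set.range fun i : Fin (n + 1) => dist (x i.castSucc) w) :=
      (Set.finite_range _).bddAbove
    have hle : ∀ i, dist (x i) w ≤ S := fun i => le_ciSup bdd i
    have hle' : ∀ i : Fin (n + 1), dist (x i.castSucc) w ≤ S' := fun i => le_ciSup bdd' i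
    have hSmax : S = max S' dlast := by
      apply le_antisymm
      · apply ciSup_le
        intro i
        induction i using Fin.lastCases with
        | last => exact le_max_right _ _
        | cast i => exact le_max_of_le_left (hle' i)
      · exact max_le (ciSup_le fun i => hle _) (hle _)
    have hz'le : dist z' w ≤ S' := (hz' w).1
    have hzle : dist z w ≤ max (dist z' w) dlast := (hz w).1
    have hchain : max (dist z' w) dlast ≤ S := by
      rw [hSmax]; exact max_le_max hz'le le_rfl
    refine ⟨hzle.trans hchain, ?_⟩
    intro heq
    have h1 : dist z w = max (dist z' w) dlast := le_antisymm hzle (heq ▸ hchain)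
    have h2 : dist z' w = dlast := (hz w).2 h1
    have h3 : max (dist z' w) dlast = S := by rw [← h1, heq]
    have h4 : dist z' w = S' := by
      apply le_antisymm hz'le
      have : S' ≤ max (dist z' w) dlast := by
        rw [h3, hSmax]; exact le_max_left _ _
      simpa [h2] using this
    have hall : ∀ i j : Fin (n + 1), dist (x i.castSucc) w = dist (x j.castSucc) w :=
      (hz' w).2 (hS' ▸ h4)
    have hconst : ∀ i : Fin (n + 1), dist (x i.castSucc) w = dlast := by
      intro i
      rw [← h2, h4]
      apply le_antisymm (hle' i)
      apply ciSup_le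
      intro j
      exact (hall j i).le
    have hall2 : ∀ i : Fin (n + 2), dist (x i) w = dlast := by
      intro i
      induction i using Fin.lastCases with
      | last => rfl
      | cast i => exact hconst i
    intro i j
    rw [hall2 i, hall2 j]
end

section
/- If (X,d) is a weakly convex compact metric space having more than one point, then r(X) < δ(X), where δ(X) is the diameter of X and r(X) = inf_{x∈X} sup_{y∈X} d(x,y) is the Chebyshev radius. -/
/-- If X is a weakly convex compact metric space having more than one
point, then the Chebyshev radius r(X) = inf_x sup_y d(x,y) is strictly smaller than
the diameter δ(X). -/
theorem chebyshevRadius_lt_diam {X : Type*} [MetricSpace X] [CompactSpace X]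
    (h : WeaklyConvex X) (hX : ∃ x y : X, x ≠ y) :
    (⨅ x : X, ⨆ y : X, dist x y) < Metric.diam (Set.univ : Set X) := by
  obtain ⟨x0, y0, hxy⟩ := hX
  have hne : Nonempty X := ⟨x0⟩
  set δ := Metric.diam (Set.univ : Set X) with hδ
  have hbdd : Bornology.IsBounded (Set.univ : Set X) := isCompact_univ.isBounded
  have hdle : ∀ a b : X, dist a b ≤ δ := fun a b =>
    Metric.dist_le_diam_of_mem hbdd (Set.mem_univ a) (Set.mem_univ b)
  have hδpos : 0 < δ := lt_of_lt_of_le (dist_pos.mpr hxy) (hdle x0 y0)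
  by_contra hcon
  push_neg at hcon
  -- every point has an antipode at distance δ
  have hanti : ∀ z : X, ∃ w : X, dist z w = δ := by
    intro z
    obtain ⟨w, -, hw⟩ := isCompact_univ.exists_isMaxOn ⟨z, trivial⟩
      (Continuous.continuousOn (continuous_const.dist continuous_id : Continuous fun y : X => dist z y))
    refine ⟨w, le_antisymm (hdle z w) ?_⟩
    have h1 : (⨆ y : X, dist z y) ≤ dist z w := ciSup_le fun y => hw trivial
    have h2 : (⨅ x : X, ⨆ y : X, dist x y) ≤ ⨆ y : X, dist z y :=
      ciInf_le ⟨0, by rintro r ⟨x, rfl⟩; exact Real.iSup_nonneg fun y => dist_nonneg⟩ z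
    linarith
  choose a ha using hanti
  choose c hc using h
  -- build the equilateral sequence
  let p : ℕ → X × X := fun n => Nat.rec (x0, x0) (fun _ q => (a q.2, c q.2 (a q.2))) n
  set x : ℕ → X := fun n => (p n).1 with hx
  set z : ℕ → X := fun n => (p n).2 with hzdef
  have hxs : ∀ n, x (n + 1) = a (z n) := fun n => rfl
  have hzs : ∀ n, z (n + 1) = c (z n) (x (n + 1)) := fun n => rfl
  -- invariant
  have Q : ∀ n w, dist (z n) w = δ → ∀ i ≤ n, dist (x i) w = δ := by
    intro n
    induction n with
    | zero =>
      intro w hw i hi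
      interval_cases i
      exact hw
    | succ n ih =>
      intro w hw i hi
      have hle := (hc (z n) (x (n + 1)) w).1
      rw [← hzs n] at hle
      have hmax : max (dist (z n) w) (dist (x (n + 1)) w) ≤ δ :=
        max_le (hdle _ _) (hdle _ _)
      have heq : dist (z (n + 1)) w = max (dist (z n) w) (dist (x (n + 1)) w) :=
        le_antisymm hle (by rw [hw]; exact hmax)
      have heq2 : dist (z n) w = dist (x (n + 1)) w := by
        have := (hc (z n) (x (n + 1)) w).2
        rw [← hzs n] at this
        exact this heq
      have hzn : dist (z n) w = δ := by
        rw [heq2, max_self] at heq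
        rw [heq2, ← heq, hw]
      rcases Nat.lt_succ_iff_lt_or_eq.mp (Nat.lt_succ_of_le hi) with h1 | h1
      · exact ih w hzn i (Nat.lt_succ_iff.mp h1)
      · subst h1
        rw [← heq2, hzn]
  have hpair : ∀ i j, i < j → dist (x i) (x j) = δ := by
    intro i j hij
    obtain ⟨m, rfl⟩ := Nat.exists_eq_succ_of_ne_zero (Nat.zero_lt_of_lt hij).ne'
    have hzm : dist (z m) (x (m + 1)) = δ := by rw [hxs m]; exact ha (z m)
    exact Q m (x (m + 1)) hzm i (Nat.lt_succ_iff.mp hij)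
  -- pigeonhole via total boundedness
  obtain ⟨t, htf, hcov⟩ :=
    Metric.totallyBounded_iff.mp (isCompact_univ : IsCompact (Set.univ : Set X)).totallyBounded (δ / 2) (by positivity)
  have hmem : ∀ n : ℕ, ∃ y ∈ t, x n ∈ Metric.ball y (δ / 2) := by
    intro n
    have := hcov (Set.mem_univ (x n))
    simpa using this
  choose g hg hgball using hmem
  obtain ⟨m, -, n, -, hmn, hgeq⟩ :=
    Set.infinite_univ.exists_ne_map_eq_of_mapsTo
      (f := g) (fun n _ => hg n) htf
  have hd1 : dist (x m) (g m) < δ / 2 := Metric.mem_ball.mp (hgball m)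
  have hd2 : dist (x n) (g n) < δ / 2 := Metric.mem_ball.mp (hgball n)
  have htri : dist (x m) (x n) ≤ dist (x m) (g m) + dist (x n) (g n) := by
    rw [hgeq]
    calc dist (x m) (x n) ≤ dist (x m) (g n) + dist (g n) (x n) := dist_triangle _ _ _
      _ = dist (x m) (g n) + dist (x n) (g n) := by rw [dist_comm (g n)]
  have hdeq : dist (x m) (x n) = δ := by
    rcases hmn.lt_or_gt with h1 | h1
    · exact hpair m n h1
    · rw [dist_comm]; exact hpair n m h1
  linarith
end

section
/- If X is a weakly convex metric space, then C(X), the Chebyshev center of X, is a fully convex subspace of X: for all a, b in C(X), every weakly middle point between a and b belongs to C(X). -/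
/-- z is a weakly middle point between x and y. -/
def IsWeaklyMiddle {X : Type*} [MetricSpace X] (x y z : X) : Prop :=
  ∀ w : X,
    dist z w ≤ max (dist x w) (dist y w) ∧
    (dist z w = max (dist x w) (dist y w) → dist x w = dist y w)

/-- If X is a weakly convex metric space, then the Chebyshev center
C(X) = {x : r_X(x) = r(X)} is a fully convex subspace of X: every weakly middle point
between two points of C(X) belongs to C(X). -/
theorem chebyshevCenter_fullyConvex {X : Type*} [MetricSpace X] (h : WeaklyConvex X)
    (a b z : X)
    (ha : (⨆ y : X, edist a y) = ⨅ x : X, ⨆ y : X, edist x y)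
    (hb : (⨆ y : X, edist b y) = ⨅ x : X, ⨆ y : X, edist x y)
    (hz : IsWeaklyMiddle a b z) :
    (⨆ y : X, edist z y) = ⨅ x : X, ⨆ y : X, edist x y := by
  apply le_antisymm
  · apply iSup_le
    intro w
    have h1 : edist z w ≤ max (edist a w) (edist b w) := by
      rw [edist_dist, edist_dist, edist_dist]
      rcases le_max_iff.mp (hz w).1 with hc | hc
      · exact le_max_of_le_left (ENNReal.ofReal_le_ofReal hc)
      · exact le_max_of_le_right (ENNReal.ofReal_le_ofReal hc)
    refine h1.trans (max_le ?_ ?_)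
    · exact (le_iSup (fun y => edist a y) w).trans ha.le
    · exact (le_iSup (fun y => edist b y) w).trans hb.le
  · exact iInf_le _ z
end

section
/- For every nonempty weakly convex compact metric space X, the set C^∞(X) := ⋂_{n≥0} C^n(X) consists of exactly one point, where C^0(X) := X and C^n(X) := C(C^{n-1}(X)) are the iterated Chebyshev centers. -/
/-- The Chebyshev radius of the subspace A at a point a. -/
noncomputable def chebRadiusAt {X : Type*} [MetricSpace X] (A : Set X) (a : X) : ℝ :=
  ⨆ b : A, dist a (b : X)

/-- The Chebyshev center of the subspace A (computed inside A). -/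
noncomputable def chebCenter {X : Type*} [MetricSpace X] (A : Set X) : Set X :=
  {a ∈ A | chebRadiusAt A a = ⨅ a' : A, chebRadiusAt A (a' : X)}

/-- The iterated Chebyshev centers C^n(X). -/
noncomputable def iterChebCenter (X : Type*) [MetricSpace X] : ℕ → Set X
  | 0 => Set.univ
  | n + 1 => chebCenter (iterChebCenter X n)

section Aux

variable {X : Type*} [MetricSpace X] [CompactSpace X]

lemma cheb_bdd (A : Set X) (a : X) : BddAbove (Set.range fun b : A => dist a (b : X)) :=
  ⟨Metric.diam (Set.univ : Set X), by
    rintro _ ⟨b, rfl⟩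
    exact Metric.dist_le_diam_of_mem isCompact_univ.isBounded (Set.mem_univ _) (Set.mem_univ _)⟩

lemma dist_le_chebRadiusAt {A : Set X} {b : X} (hb : b ∈ A) (a : X) :
    dist a b ≤ chebRadiusAt A a := le_ciSup (cheb_bdd A a) ⟨b, hb⟩

lemma chebRadiusAt_le {A : Set X} (hA : A.Nonempty) {a : X} {c : ℝ}
    (hc : ∀ b ∈ A, dist a b ≤ c) : chebRadiusAt A a ≤ c := by
  haveI := hA.to_subtype
  exact ciSup_le fun b => hc b b.2

lemma chebRadiusAt_nonneg {A : Set X} (hA : A.Nonempty) (a : X) :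
    0 ≤ chebRadiusAt A a := by
  obtain ⟨b, hb⟩ := hA
  exact le_trans dist_nonneg (dist_le_chebRadiusAt hb a)

lemma exists_far {A : Set X} (hA : A.Nonempty) (hAc : IsCompact A) (a : X) :
    ∃ w ∈ A, dist a w = chebRadiusAt A a := by
  obtain ⟨w, hw, hmax⟩ := hAc.exists_isMaxOn hA
    (Continuous.continuousOn (continuous_const.dist continuous_id))
  exact ⟨w, hw, le_antisymm (dist_le_chebRadiusAt hw a)
    (chebRadiusAt_le hA fun b hb => hmax hb)⟩

lemma chebRadiusAt_continuous {A : Set X} (hA : A.Nonempty) :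
    Continuous (chebRadiusAt A) := by
  have : LipschitzWith 1 (chebRadiusAt A) := by
    apply LipschitzWith.of_dist_le_mul
    intro a b
    rw [NNReal.coe_one, one_mul, Real.dist_eq, abs_sub_le_iff]
    constructor
    · have : chebRadiusAt A a ≤ chebRadiusAt A b + dist a b := by
        apply chebRadiusAt_le hA
        intro w hw
        calc dist a w ≤ dist a b + dist b w := dist_triangle a b w
        _ ≤ dist a b + chebRadiusAt A b := by
            have := dist_le_chebRadiusAt hw b; linarith
        _ = chebRadiusAt A b + dist a b := by ring
      linarith
    · have : chebRadiusAt A b ≤ chebRadiusAt A a + dist a b := by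
        apply chebRadiusAt_le hA
        intro w hw
        calc dist b w ≤ dist b a + dist a w := dist_triangle b a w
        _ ≤ dist a b + chebRadiusAt A a := by
            have := dist_le_chebRadiusAt hw a; rw [dist_comm b a]; linarith
        _ = chebRadiusAt A a + dist a b := by ring
      linarith
  exact this.continuous

lemma mem_chebCenter {A : Set X} {a : X} :
    a ∈ chebCenter A ↔ a ∈ A ∧ chebRadiusAt A a = ⨅ a' : A, chebRadiusAt A (a' : X) :=
  Iff.rfl

lemma chebCenter_isClosed {A : Set X} (hA : A.Nonempty) (hAcl : IsClosed A) :
    IsClosed (chebCenter A) := by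
  have heq : chebCenter A =
      A ∩ (chebRadiusAt A) ⁻¹' {⨅ a' : A, chebRadiusAt A (a' : X)} := by
    ext a; simp [chebCenter]
  rw [heq]
  exact hAcl.inter (isClosed_singleton.preimage (chebRadiusAt_continuous hA))

lemma chebCenter_nonempty {A : Set X} (hA : A.Nonempty) (hAc : IsCompact A) :
    (chebCenter A).Nonempty := by
  obtain ⟨a₀, ha₀, hmin⟩ := hAc.exists_isMinOn hA (chebRadiusAt_continuous hA).continuousOn
  haveI := hA.to_subtype
  refine ⟨a₀, ha₀, le_antisymm ?_ ?_⟩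
  · exact le_ciInf fun a' => hmin a'.2
  · have hbdd : BddBelow (Set.range fun a' : A => chebRadiusAt A (a' : X)) :=
      ⟨0, by rintro _ ⟨a', rfl⟩; exact chebRadiusAt_nonneg hA _⟩
    exact ciInf_le hbdd ⟨a₀, ha₀⟩

lemma chebCenter_subset {A : Set X} : chebCenter A ⊆ A := fun _ ha => ha.1

end Aux

/-- For every nonempty weakly convex compact metric space X, the set
C^∞(X) = ⋂ₙ C^n(X) consists of exactly one point. -/
theorem iterChebCenter_iInter_singleton {X : Type*} [MetricSpace X] [CompactSpace X]
    [Nonempty X] (h : WeaklyConvex X) :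
    ∃ c : X, ⋂ n : ℕ, iterChebCenter X n = {c} := by
  classical
  set C : ℕ → Set X := iterChebCenter X with hC
  have hsucc : ∀ n, C (n + 1) = chebCenter (C n) := fun n => rfl
  -- basic properties of the iterated centers
  have hprops : ∀ n, (C n).Nonempty ∧ IsClosed (C n) := by
    intro n
    induction n with
    | zero => exact ⟨Set.univ_nonempty, isClosed_univ⟩
    | succ n ih =>
      rw [hsucc]
      exact ⟨chebCenter_nonempty ih.1 ih.2.isCompact, chebCenter_isClosed ih.1 ih.2⟩
  have hne : ∀ n, (C n).Nonempty := fun n => (hprops n).1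
  have hcl : ∀ n, IsClosed (C n) := fun n => (hprops n).2
  have hcpt : ∀ n, IsCompact (C n) := fun n => (hcl n).isCompact
  have hsub : ∀ n, C (n + 1) ⊆ C n := by
    intro n; rw [hsucc]; exact chebCenter_subset
  set D : Set X := ⋂ n, C n with hD
  have hDsub : ∀ n, D ⊆ C n := fun n => Set.iInter_subset _ n
  have hDne : D.Nonempty :=
    IsCompact.nonempty_iInter_of_sequence_nonempty_isCompact_isClosed C hsub hne (hcpt 0) hcl
  have hDcl : IsClosed D := isClosed_iInter hcl
  have hDcpt : IsCompact D := hDcl.isCompact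
  -- radii at points of D with respect to C n
  set ρ : ℕ → ℝ := fun n => ⨅ a' : C n, chebRadiusAt (C n) (a' : X) with hρ
  have hmemD : ∀ a ∈ D, ∀ n, chebRadiusAt (C n) a = ρ n := by
    intro a ha n
    have : a ∈ C (n + 1) := hDsub (n + 1) ha
    rw [hsucc] at this
    exact this.2
  -- all points of D have the same radius within D
  have hDradeq : ∀ a ∈ D, ∀ b ∈ D, chebRadiusAt D a ≤ chebRadiusAt D b := by
    intro a ha b hb
    set t : ℝ := chebRadiusAt D a with ht
    set K : ℕ → Set X := fun n => {w | w ∈ C n ∧ t ≤ dist b w} with hK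
    have hKsub : ∀ n, K (n + 1) ⊆ K n := fun n w hw => ⟨hsub n hw.1, hw.2⟩
    have hKne : ∀ n, (K n).Nonempty := by
      intro n
      obtain ⟨w, hw, hwd⟩ := exists_far (hne n) (hcpt n) b
      refine ⟨w, hw, ?_⟩
      rw [hwd, hmemD b hb n, ← hmemD a ha n]
      exact chebRadiusAt_le hDne fun v hv => dist_le_chebRadiusAt (hDsub n hv) a
    have hKcl : ∀ n, IsClosed (K n) := by
      intro n
      exact (hcl n).inter (isClosed_le continuous_const (continuous_const.dist continuous_id))
    obtain ⟨w, hw⟩ := IsCompact.nonempty_iInter_of_sequence_nonempty_isCompact_isClosed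
      K hKsub hKne (hKcl 0).isCompact hKcl
    have hwD : w ∈ D := Set.mem_iInter.2 fun n => (Set.mem_iInter.1 hw n).1
    have hwt : t ≤ dist b w := (Set.mem_iInter.1 hw 0).2
    exact hwt.trans (dist_le_chebRadiusAt hwD b)
  obtain ⟨a₀, ha₀⟩ := id hDne
  set r : ℝ := chebRadiusAt D a₀ with hr
  have hrad : ∀ a ∈ D, chebRadiusAt D a = r :=
    fun a ha => le_antisymm (hDradeq a ha a₀ ha₀) (hDradeq a₀ ha₀ a ha)
  -- weak convexity witnesses for points of D stay in D
  have hzD : ∀ x ∈ D, ∀ y ∈ D, ∀ z : X,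
      (∀ w : X, dist z w ≤ max (dist x w) (dist y w)) → z ∈ D := by
    intro x hx y hy z hz
    apply Set.mem_iInter.2
    intro n
    induction n with
    | zero => exact Set.mem_univ z
    | succ n ih =>
      rw [hsucc]
      refine ⟨ih, le_antisymm ?_ ?_⟩
      · apply chebRadiusAt_le (hne n)
        intro w hw
        calc dist z w ≤ max (dist x w) (dist y w) := hz w
        _ ≤ ρ n := by
            apply max_le
            · rw [← hmemD x hx n]; exact dist_le_chebRadiusAt hw x
            · rw [← hmemD y hy n]; exact dist_le_chebRadiusAt hw y
      · have hbdd : BddBelow (Set.range fun a' : C n => chebRadiusAt (C n) (a' : X)) :=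
          ⟨0, by rintro _ ⟨a', rfl⟩; exact chebRadiusAt_nonneg (hne n) _⟩
        exact ciInf_le hbdd ⟨z, ih⟩
  rcases eq_or_lt_of_le (chebRadiusAt_nonneg hDne a₀) with hr0 | hrpos
  · -- r = 0 : D is the singleton {a₀}
    refine ⟨a₀, ?_⟩
    apply Set.eq_singleton_iff_nonempty_unique_mem.2
    refine ⟨hDne, ?_⟩
    intro w hw
    have hle : dist a₀ w ≤ r := dist_le_chebRadiusAt hw a₀
    exact (dist_le_zero.1 (hle.trans_eq (hr.trans hr0.symm))).symm
  · -- r > 0 : contradiction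
    exfalso
    set F : X → Set X := fun a => {w | w ∈ D ∧ r ≤ dist a w} with hF
    have hFne : ∀ a ∈ D, (F a).Nonempty := by
      intro a ha
      obtain ⟨w, hw, hwd⟩ := exists_far hDne hDcpt a
      exact ⟨w, hw, by rw [hwd, hrad a ha]⟩
    have hFcl : ∀ a : X, IsClosed (F a) :=
      fun a => hDcl.inter (isClosed_le continuous_const (continuous_const.dist continuous_id))
    have hkey : ∀ x ∈ D, ∀ y ∈ D, ∃ z ∈ D, F z ⊆ F x ∩ F y := by
      intro x hx y hy
      obtain ⟨z, hz⟩ := h x y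
      have hzmem : z ∈ D := hzD x hx y hy z fun w => (hz w).1
      refine ⟨z, hzmem, ?_⟩
      rintro w ⟨hwD, hwr⟩
      have hxw : dist x w ≤ r := by
        rw [← hrad x hx]; exact dist_le_chebRadiusAt hwD x
      have hyw : dist y w ≤ r := by
        rw [← hrad y hy]; exact dist_le_chebRadiusAt hwD y
      have hmax : max (dist x w) (dist y w) ≤ r := max_le hxw hyw
      have heq : dist z w = max (dist x w) (dist y w) :=
        le_antisymm (hz w).1 (hmax.trans hwr)
      have hxy : dist x w = dist y w := (hz w).2 heq
      have hrle : r ≤ max (dist x w) (dist y w) := heq ▸ hwr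
      rw [hxy, max_self] at hrle
      exact ⟨⟨hwD, by rw [hxy]; exact hrle⟩, ⟨hwD, hrle⟩⟩
    -- finite intersection property
    have hfin : ∀ t : Finset ↥D, ∃ b ∈ D, F b ⊆ ⋂ a ∈ t, F (a : X) := by
      intro t
      induction t using Finset.induction_on with
      | empty => exact ⟨a₀, ha₀, by simp⟩
      | @insert a s ha ih =>
        obtain ⟨b, hb, hbsub⟩ := ih
        obtain ⟨z, hz, hzsub⟩ := hkey (a : X) a.2 b hb
        refine ⟨z, hz, ?_⟩
        intro w hw
        rw [Finset.set_biInter_insert]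
        exact ⟨(hzsub hw).1, hbsub (hzsub hw).2⟩
    have hbig : (D ∩ ⋂ a : ↥D, F (a : X)).Nonempty := by
      by_contra hempty
      rw [Set.not_nonempty_iff_eq_empty] at hempty
      obtain ⟨t, ht⟩ := hDcpt.elim_finite_subfamily_closed
        (fun a : ↥D => F (a : X)) (fun a => hFcl (a : X)) hempty
      obtain ⟨b, hb, hbsub⟩ := hfin t
      obtain ⟨w, hw⟩ := hFne b hb
      have : w ∈ D ∩ ⋂ a ∈ t, F (a : X) := ⟨hw.1, hbsub hw⟩
      rw [ht] at this
      exact this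
    obtain ⟨w, hwD, hwint⟩ := hbig
    have : r ≤ dist w w := (Set.mem_iInter.1 hwint ⟨w, hwD⟩).2
    rw [dist_self] at this
    linarith
end

section
/- For a compact metric space (X,d), let X^{(1)} be the set of orbits of X under the isometry group of X, with canonical projection π: X → X^{(1)}, and let d^{(1)} be the greatest pseudometric on X^{(1)} making π nonexpansive. Then d^{(1)} is a metric, i.e., d^{(1)}(π(x), π(y)) = 0 implies that x and y lie in the same orbit. -/
/-- The greatest pseudometric d⁽¹⁾ on the orbit space X⁽¹⁾ making the projection
nonexpansive, expressed on representatives: d⁽¹⁾(π x, π y) is the supremum of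
|f x - f y| over all 1-Lipschitz functions f : X → ℝ invariant under every surjective
isometry of X (such f are exactly those of the form g ∘ π with g ∘ π nonexpansive). -/
noncomputable def orbitDist {X : Type*} [MetricSpace X] (x y : X) : ℝ :=
  sSup {r : ℝ | ∃ f : X → ℝ, LipschitzWith 1 f ∧
    (∀ (Φ : X ≃ᵢ X) (a : X), f (Φ a) = f a) ∧ r = |f x - f y|}

/-!
The distance to the orbit of `x` is 1-Lipschitz and invariant under isometries, so it
vanishes at `y` when `orbitDist x y = 0`, i.e. `y` lies in the closure of the orbit of `x`.
In a compact space orbits are closed: by Arzelà–Ascoli, isometries `Φₙ` with `Φₙ x → y`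
have a uniformly convergent subsequence, whose limit is an isometry `X → X` sending `x` to
`y`, and an isometry of a compact space into itself is onto.
-/

open Metric BoundedContinuousFunction Filter

theorem Isometry.iterate {X : Type*} [PseudoEMetricSpace X] {g : X → X} (hg : Isometry g) :
    ∀ n : ℕ, Isometry g^[n]
  | 0 => isometry_id
  | n + 1 => (hg.iterate n).comp hg

/-- If `z` is not in the closed set `range g`, the iterates `gⁿ z` are pairwise at distance
at least `infDist z (range g)`, which compactness forbids. -/
theorem Isometry.surjective_of_compactSpace {X : Type*} [MetricSpace X] [CompactSpace X]
    {g : X → X} (hg : Isometry g) : Function.Surjective g := by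
  by_contra hsurj
  obtain ⟨z, hz⟩ := Set.ne_univ_iff_exists_notMem _ |>.1 (mt Set.range_eq_univ.1 hsurj)
  have hε : 0 < infDist z (Set.range g) :=
    ((isCompact_range hg.continuous).isClosed.notMem_iff_infDist_pos
      ⟨g z, z, rfl⟩).1 hz
  have hsep : ∀ m k : ℕ, infDist z (Set.range g) ≤ dist (g^[m + (k + 1)] z) (g^[m] z) := by
    intro m k
    rw [Function.iterate_add_apply, (hg.iterate m).dist_eq, dist_comm,
      Function.iterate_succ_apply']
    exact infDist_le_dist_of_mem ⟨_, rfl⟩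
  obtain ⟨_, -, φ, hφ, hlim⟩ :=
    isCompact_univ.tendsto_subseq (x := fun n => g^[n] z) fun _ => Set.mem_univ _
  obtain ⟨N, hN⟩ := Metric.cauchySeq_iff.1 hlim.cauchySeq _ hε
  obtain ⟨k, hk⟩ : ∃ k, φ (N + 1) = φ N + (k + 1) :=
    ⟨φ (N + 1) - φ N - 1, by have := hφ (Nat.lt_add_one N); omega⟩
  have hclose : dist (g^[φ (N + 1)] z) (g^[φ N] z) < _ := hN (N + 1) N.le_succ N le_rfl
  rw [hk] at hclose
  exact (hsep (φ N) k).not_gt hclose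

theorem isCompact_setOf_isometry (X : Type*) [MetricSpace X] [CompactSpace X] :
    IsCompact {f : X →ᵇ X | Isometry f} := by
  refine arzela_ascoli₁ _ ?_ ?_
  · simp only [isometry_iff_dist_eq, Set.ofPred_forall]
    exact isClosed_iInter fun a => isClosed_iInter fun b =>
      isClosed_eq ((continuous_eval_const a).dist (continuous_eval_const b)) continuous_const
  · exact equicontinuous_of_continuity_modulus id tendsto_id _ fun a b f => (f.2.dist_eq a b).le

def isometryOrbit {X : Type*} [PseudoEMetricSpace X] (x : X) : Set X :=
  Set.range fun Φ : X ≃ᵢ X => Φ x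

theorem mem_isometryOrbit_self {X : Type*} [PseudoEMetricSpace X] (x : X) :
    x ∈ isometryOrbit x :=
  ⟨1, rfl⟩

theorem IsometryEquiv.image_isometryOrbit {X : Type*} [PseudoEMetricSpace X] (Ψ : X ≃ᵢ X)
    (x : X) : Ψ '' isometryOrbit x = isometryOrbit x := by
  rw [isometryOrbit, ← Set.range_comp]
  exact (mul_left_surjective Ψ).range_comp fun Φ : X ≃ᵢ X => Φ x

theorem infDist_isometryOrbit_apply {X : Type*} [MetricSpace X] (x : X) (Ψ : X ≃ᵢ X) (a : X) :
    infDist (Ψ a) (isometryOrbit x) = infDist a (isometryOrbit x) := by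
  conv_lhs => rw [← Ψ.image_isometryOrbit x]
  exact infDist_image Ψ.isometry

theorem isClosed_isometryOrbit {X : Type*} [MetricSpace X] [CompactSpace X] (x : X) :
    IsClosed (isometryOrbit x) := by
  refine isClosed_of_closure_subset fun y hy => ?_
  obtain ⟨u, hu, hux⟩ := mem_closure_iff_seq_limit.1 hy
  choose Φ hΦ using hu
  obtain ⟨g, hg, ψ, hψ, hgψ⟩ := (isCompact_setOf_isometry X).tendsto_subseq
    (x := fun n => mkOfCompact ⟨Φ n, (Φ n).continuous⟩) fun n => (Φ n).isometry
  have hgx : g x = y := by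
    refine tendsto_nhds_unique (((continuous_eval_const x).tendsto g).comp hgψ) ?_
    simpa [Function.comp_def, hΦ] using hux.comp hψ.tendsto_atTop
  let G : X ≃ᵢ X :=
    ⟨Equiv.ofBijective g ⟨hg.injective, hg.surjective_of_compactSpace⟩, hg⟩
  exact ⟨G, hgx⟩

theorem abs_sub_le_orbitDist {X : Type*} [MetricSpace X] {f : X → ℝ} (hf : LipschitzWith 1 f)
    (hinv : ∀ (Φ : X ≃ᵢ X) (a : X), f (Φ a) = f a) (x y : X) :
    |f x - f y| ≤ orbitDist x y := by
  refine le_csSup ⟨dist x y, ?_⟩ ⟨f, hf, hinv, rfl⟩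
  rintro r ⟨f, hf, -, rfl⟩
  simpa [Real.dist_eq] using hf.dist_le_mul x y

/-- For a compact metric space X, the greatest pseudometric d⁽¹⁾ on the
orbit space X⁽¹⁾ making the canonical projection nonexpansive is a metric:
d⁽¹⁾(π x, π y) = 0 implies that x and y lie in the same orbit of the isometry group. -/
theorem orbitDist_eq_zero_iff_sameOrbit {X : Type*} [MetricSpace X] [CompactSpace X]
    (x y : X) (h : orbitDist x y = 0) :
    ∃ Φ : X ≃ᵢ X, Φ x = y := by
  have hle : |infDist x (isometryOrbit x) - infDist y (isometryOrbit x)| ≤ 0 :=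
    h ▸ abs_sub_le_orbitDist (lipschitz_infDist_pt _) (infDist_isometryOrbit_apply x) x y
  have hy : infDist y (isometryOrbit x) = 0 := by
    rwa [infDist_zero_of_mem (mem_isometryOrbit_self x), zero_sub, abs_neg,
      abs_nonpos_iff] at hle
  exact ((isClosed_isometryOrbit x).mem_iff_infDist_zero ⟨x, mem_isometryOrbit_self x⟩).2 hy
end

section
/- Let (X,d) be a compact metric space. Define ϱ(a,b) for a,b ∈ X as the Gromov–Hausdorff-type distance between the pointed metric spaces (X,a) and (X,b). Then ϱ is a pseudometric on X satisfying ϱ ≤ d, and ϱ(a,b) = 0 if and only if there exists a surjective isometry Φ of X with Φ(a) = b. -/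
/-- The Gromov–Hausdorff-type distance ϱ(a,b) between the pointed metric spaces (X,a)
and (X,b): the infimum, over all pseudometrics p on the disjoint union X ⊔ X extending
the metric of X on each copy, of p_H(X₁,X₂) + p((a,1),(b,2)), where p_H is the
Hausdorff distance induced by p. -/
noncomputable def pointedGH {X : Type*} [MetricSpace X] (a b : X) : ℝ :=
  sInf {r : ℝ | ∃ p : (X ⊕ X) → (X ⊕ X) → ℝ,
    (∀ u, p u u = 0) ∧ (∀ u v, 0 ≤ p u v) ∧ (∀ u v, p u v = p v u) ∧
    (∀ u v w, p u w ≤ p u v + p v w) ∧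
    (∀ x y : X, p (Sum.inl x) (Sum.inl y) = dist x y) ∧
    (∀ x y : X, p (Sum.inr x) (Sum.inr y) = dist x y) ∧
    r = max (⨆ x : X, ⨅ y : X, p (Sum.inl x) (Sum.inr y))
            (⨆ y : X, ⨅ x : X, p (Sum.inl x) (Sum.inr y))
        + p (Sum.inl a) (Sum.inr b)}

/-!
A pseudometric `p` on `X ⊕ X` extending the metric on both copies is determined by its cross
distances `m x y = p (inl x) (inr y)`, and the admissible `m` are characterized by five
triangle inequalities (`IsCrossDist`). In these terms `ϱ(a, b)` is the infimum of
`crossHausdorff m + m a b`. An isometry `Φ` gives the admissible `m x y = dist (Φ x) y` with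
vanishing Hausdorff part, whence `ϱ ≤ d` and `ϱ(a, Φ a) = 0`; swapping the copies gives
symmetry; and composing cross distances, `crossComp m n x z = ⨅ y, m x y + n y z`, gives the
triangle inequality.

If `ϱ(a, b) = 0`, choosing for each `x` a partner `y` with `m x y < ε / 2` gives maps of
distortion `≤ ε` moving `a` to within `ε` of `b`; by compactness a pointwise ultrafilter limit
of these is an isometry sending `a` to `b`, and an isometric self-map of a compact metric space
is onto.
-/

open Set Filter Topology Function

theorem bddBelow_range_of_nonneg {ι : Sort*} {f : ι → ℝ} (hf : ∀ i, 0 ≤ f i) :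
    BddBelow (range f) :=
  ⟨0, forall_mem_range.2 hf⟩

theorem iSup_iInf_iInf_add_le {α β γ : Type*} [Nonempty β] [Nonempty γ]
    {f : α → β → ℝ} {g : β → γ → ℝ} (hf : ∀ x y, 0 ≤ f x y) (hg : ∀ y z, 0 ≤ g y z)
    (hf' : BddAbove (range fun x => ⨅ y, f x y))
    (hg' : BddAbove (range fun y => ⨅ z, g y z)) :
    ⨆ x, ⨅ z, ⨅ y, (f x y + g y z) ≤ (⨆ x, ⨅ y, f x y) + ⨆ y, ⨅ z, g y z := by
  have hfg (x : α) (z : γ) (y : β) : 0 ≤ f x y + g y z := add_nonneg (hf x y) (hg y z)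
  refine Real.iSup_le (fun x => ?_) <| add_nonneg
    (Real.iSup_nonneg fun x => Real.iInf_nonneg (hf x))
    (Real.iSup_nonneg fun y => Real.iInf_nonneg (hg y))
  have key (y : β) : ⨅ z, ⨅ y', (f x y' + g y' z) ≤ f x y + ⨆ y, ⨅ z, g y z := calc
    _ ≤ ⨅ z, (f x y + g y z) :=
        ciInf_mono (bddBelow_range_of_nonneg fun z => Real.iInf_nonneg (hfg x z))
          fun z => ciInf_le (bddBelow_range_of_nonneg (hfg x z)) y
    _ = f x y + ⨅ z, g y z := (add_ciInf (bddBelow_range_of_nonneg (hg y)) _).symm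
    _ ≤ f x y + ⨆ y, ⨅ z, g y z := add_le_add_right (le_ciSup hg' y) _
  exact (le_ciInf_add key).trans (add_le_add_left (le_ciSup hf' x) _)

section CrossDist

variable {X Y Z : Type*}

noncomputable def crossHausdorff (m : X → Y → ℝ) : ℝ :=
  max (⨆ x, ⨅ y, m x y) (⨆ y, ⨅ x, m x y)

noncomputable def crossComp (m : X → Y → ℝ) (n : Y → Z → ℝ) (x : X) (z : Z) : ℝ :=
  ⨅ y, m x y + n y z

theorem crossHausdorff_flip (m : X → Y → ℝ) : crossHausdorff (flip m) = crossHausdorff m :=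
  max_comm _ _

variable [PseudoMetricSpace X] [PseudoMetricSpace Y] [PseudoMetricSpace Z]

structure IsCrossDist (m : X → Y → ℝ) : Prop where
  nonneg : ∀ x y, 0 ≤ m x y
  le_dist_add : ∀ x x' y, m x y ≤ dist x x' + m x' y
  le_add_dist : ∀ x y y', m x y ≤ m x y' + dist y' y
  dist_left_le : ∀ x x' y, dist x x' ≤ m x y + m x' y
  dist_right_le : ∀ x y y', dist y y' ≤ m x y + m x y'

def sumDist (m : X → Y → ℝ) : X ⊕ Y → X ⊕ Y → ℝ
  | .inl x, .inl x' => dist x x'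
  | .inr y, .inr y' => dist y y'
  | .inl x, .inr y => m x y
  | .inr y, .inl x => m x y

theorem isCrossDist_of_pseudometric {p : X ⊕ Y → X ⊕ Y → ℝ} (hp : ∀ u v, 0 ≤ p u v)
    (hsymm : ∀ u v, p u v = p v u) (htri : ∀ u v w, p u w ≤ p u v + p v w)
    (hl : ∀ x x', p (.inl x) (.inl x') = dist x x')
    (hr : ∀ y y', p (.inr y) (.inr y') = dist y y') :
    IsCrossDist fun x y => p (.inl x) (.inr y) where
  nonneg _ _ := hp _ _
  le_dist_add x x' _ := hl x x' ▸ htri _ _ _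
  le_add_dist _ y y' := hr y' y ▸ htri _ _ _
  dist_left_le x x' y := hl x x' ▸ hsymm (.inr y) (.inl x') ▸ htri _ _ _
  dist_right_le x y y' := hr y y' ▸ hsymm (.inr y) (.inl x) ▸ htri _ _ _

namespace IsCrossDist

variable {m : X → Y → ℝ} {n : Y → Z → ℝ}

theorem flip (hm : IsCrossDist m) : IsCrossDist (flip m) where
  nonneg y x := hm.nonneg x y
  le_dist_add y y' x := (hm.le_add_dist x y y').trans_eq (by rw [add_comm, dist_comm]; rfl)
  le_add_dist y x x' := (hm.le_dist_add x x' y).trans_eq (by rw [add_comm, dist_comm]; rfl)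
  dist_left_le y y' x := hm.dist_right_le x y y'
  dist_right_le y x x' := hm.dist_left_le x x' y

theorem dist_right_le_add (hm : IsCrossDist m) (x x' : X) (y y' : Y) :
    dist y y' ≤ m x y + dist x x' + m x' y' := by
  linarith [hm.dist_right_le x y y', hm.le_dist_add x x' y']

theorem dist_left_le_add (hm : IsCrossDist m) (x x' : X) (y y' : Y) :
    dist x x' ≤ m x y + dist y y' + m x' y' :=
  hm.flip.dist_right_le_add y y' x x'

theorem crossHausdorff_nonneg (hm : IsCrossDist m) : 0 ≤ crossHausdorff m :=
  le_max_of_le_left <| Real.iSup_nonneg fun x => Real.iInf_nonneg (hm.nonneg x)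

theorem sumDist_triangle (hm : IsCrossDist m) (u v w : X ⊕ Y) :
    sumDist m u w ≤ sumDist m u v + sumDist m v w := by
  rcases u with x | y <;> rcases v with x' | y' <;> rcases w with x'' | y'' <;>
    simp only [sumDist]
  · exact dist_triangle x x' x''
  · exact hm.le_dist_add x x' y''
  · exact hm.dist_left_le x x'' y'
  · exact (hm.le_add_dist x y'' y').trans_eq (by rw [dist_comm])
  · exact (hm.le_dist_add x'' x' y).trans_eq (by rw [dist_comm, add_comm])
  · exact hm.dist_right_le x' y y''
  · exact (hm.le_add_dist x'' y y').trans_eq (by rw [dist_comm, add_comm])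
  · exact dist_triangle y y' y''

theorem crossComp_le (hm : IsCrossDist m) (hn : IsCrossDist n) (x : X) (y : Y) (z : Z) :
    crossComp m n x z ≤ m x y + n y z :=
  ciInf_le (bddBelow_range_of_nonneg fun y => add_nonneg (hm.nonneg x y) (hn.nonneg y z)) y

theorem crossComp [Nonempty Y] (hm : IsCrossDist m) (hn : IsCrossDist n) :
    IsCrossDist (crossComp m n) := by
  have hmn (x : X) (z : Z) (y : Y) : 0 ≤ m x y + n y z :=
    add_nonneg (hm.nonneg x y) (hn.nonneg y z)
  have hbdd (x : X) (z : Z) := bddBelow_range_of_nonneg (hmn x z)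
  unfold _root_.crossComp
  refine ⟨fun x z => Real.iInf_nonneg (hmn x z),
    fun x x' z => ?_, fun x z z' => ?_, fun x x' z => ?_, fun x z z' => ?_⟩
  · rw [add_ciInf (hbdd x' z)]
    exact ciInf_mono (hbdd x z) fun y => by linarith [hm.le_dist_add x x' y]
  · rw [ciInf_add (hbdd x z')]
    exact ciInf_mono (hbdd x z) fun y => by linarith [hn.le_add_dist y z z']
  · exact le_ciInf_add_ciInf fun y y' => by
      linarith [hm.dist_left_le_add x x' y y', hn.dist_left_le y y' z]
  · exact le_ciInf_add_ciInf fun y y' => by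
      linarith [hn.dist_right_le_add y y' z z', hm.dist_right_le x y y']

theorem bddAbove_range_iInf [BoundedSpace X] [Nonempty X] [Nonempty Y] (hm : IsCrossDist m) :
    BddAbove (range fun x => ⨅ y, m x y) := by
  obtain ⟨x₀⟩ := ‹Nonempty X›
  obtain ⟨y₀⟩ := ‹Nonempty Y›
  refine ⟨Metric.diam (univ : Set X) + m x₀ y₀, forall_mem_range.2 fun x => ?_⟩
  calc ⨅ y, m x y ≤ m x y₀ := ciInf_le (bddBelow_range_of_nonneg (hm.nonneg x)) y₀
    _ ≤ dist x x₀ + m x₀ y₀ := hm.le_dist_add x x₀ y₀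
    _ ≤ Metric.diam (univ : Set X) + m x₀ y₀ := by
      gcongr
      exact Metric.dist_le_diam_of_mem BoundedSpace.bounded_univ (mem_univ x) (mem_univ x₀)

theorem crossHausdorff_crossComp_le [BoundedSpace X] [BoundedSpace Y] [BoundedSpace Z]
    [Nonempty X] [Nonempty Y] [Nonempty Z] (hm : IsCrossDist m) (hn : IsCrossDist n) :
    crossHausdorff (_root_.crossComp m n) ≤ crossHausdorff m + crossHausdorff n := by
  refine max_le ((iSup_iInf_iInf_add_le hm.nonneg hn.nonneg hm.bddAbove_range_iInf
    hn.bddAbove_range_iInf).trans (add_le_add (le_max_left _ _) (le_max_left _ _))) ?_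
  -- The `⨆ z, ⨅ x` half is the `⨆ x, ⨅ z` half for the flipped pair `(flip n, flip m)`.
  have := iSup_iInf_iInf_add_le hn.flip.nonneg hm.flip.nonneg hn.flip.bddAbove_range_iInf
    hm.flip.bddAbove_range_iInf
  simp only [Function.flip_def, add_comm (n _ _)] at this
  exact this.trans ((add_comm _ _).trans_le (add_le_add (le_max_right _ _) (le_max_right _ _)))

end IsCrossDist

theorem Isometry.isCrossDist {Φ : X → Y} (hΦ : Isometry Φ) :
    IsCrossDist fun x y => dist (Φ x) y where
  nonneg _ _ := dist_nonneg
  le_dist_add x x' _ := hΦ.dist_eq x x' ▸ dist_triangle _ _ _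
  le_add_dist _ _ _ := dist_triangle _ _ _
  dist_left_le x x' _ := hΦ.dist_eq x x' ▸ dist_triangle_right _ _ _
  dist_right_le _ _ _ := dist_triangle_left _ _ _

theorem IsometryEquiv.crossHausdorff_dist_eq_zero (Φ : X ≃ᵢ Y) :
    crossHausdorff (fun x y => dist (Φ x) y) = 0 := by
  have h₁ (x : X) : ⨅ y, dist (Φ x) y = 0 := le_antisymm
    (ciInf_le_of_le (bddBelow_range_of_nonneg fun _ => dist_nonneg) (Φ x) (dist_self _).le)
    (Real.iInf_nonneg fun _ => dist_nonneg)
  have h₂ (y : Y) : ⨅ x, dist (Φ x) y = 0 := le_antisymm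
    (ciInf_le_of_le (bddBelow_range_of_nonneg fun _ => dist_nonneg) (Φ.symm y) (by simp))
    (Real.iInf_nonneg fun _ => dist_nonneg)
  simp [crossHausdorff, h₁, h₂]

end CrossDist

theorem Isometry.surjective_of_compactSpace_s14 {X : Type*} [MetricSpace X] [CompactSpace X]
    {f : X → X} (hf : Isometry f) : Surjective f := by
  have hiter (n : ℕ) : Isometry f^[n] := by
    induction n with
    | zero => exact isometry_id
    | succ n ih => exact ih.comp hf
  intro x
  suffices x ∈ closure (range f) by
    rwa [(isCompact_range hf.continuous).isClosed.closure_eq] at this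
  refine Metric.mem_closure_iff.2 fun ε hε => ?_
  -- Two close points of the orbit of `x` show that `x` is close to a point of the orbit of `f x`.
  obtain ⟨y, -, φ, hφ, hlim⟩ :=
    isCompact_univ.tendsto_subseq (x := fun n => f^[n] x) fun n => mem_univ _
  obtain ⟨N, hN⟩ := Metric.cauchySeq_iff'.1 hlim.cauchySeq ε hε
  obtain ⟨k, hk⟩ := Nat.exists_eq_add_of_lt (hφ N.lt_succ_self)
  refine ⟨f^[k + 1] x, ⟨f^[k] x, (iterate_succ_apply' f k x).symm⟩, ?_⟩
  have := hN (N + 1) N.le_succ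
  simp only [comp_apply] at this
  rwa [hk, add_assoc, iterate_add_apply, (hiter _).dist_eq, dist_comm] at this

theorem exists_isometry_of_forall_approx {X Y : Type*} [PseudoMetricSpace X] [MetricSpace Y]
    [CompactSpace Y] {a : X} {b : Y} (h : ∀ ε > 0, ∃ f : X → Y,
      (∀ x y, |dist (f x) (f y) - dist x y| ≤ ε) ∧ dist (f a) b ≤ ε) :
    ∃ Φ : X → Y, Isometry Φ ∧ Φ a = b := by
  choose f hf using fun n : ℕ => h (1 / (n + 1)) Nat.one_div_pos_of_nat
  let U : Ultrafilter ℕ := .of atTop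
  have hU : Tendsto (fun n : ℕ => 1 / ((n : ℝ) + 1)) U (𝓝 0) :=
    tendsto_one_div_add_atTop_nhds_zero_nat.mono_left (Ultrafilter.of_le _)
  let Φ x := (U.map fun n => f n x).lim
  have hΦ (x : X) : Tendsto (fun n => f n x) U (𝓝 (Φ x)) := by
    rw [Tendsto, ← Ultrafilter.coe_map]
    exact Ultrafilter.le_nhds_lim _
  refine ⟨Φ, Isometry.of_dist_eq fun x y => ?_, ?_⟩
  · refine tendsto_nhds_unique ((hΦ x).dist (hΦ y)) (tendsto_iff_dist_tendsto_zero.2 ?_)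
    exact squeeze_zero (fun _ => dist_nonneg)
      (fun n => ((hf n).1 x y).trans_eq' (Real.dist_eq _ _)) hU
  · exact tendsto_nhds_unique (hΦ a) <| tendsto_iff_dist_tendsto_zero.2 <|
      squeeze_zero (fun _ => dist_nonneg) (fun n => (hf n).2) hU

section PointedGH

variable {X : Type*} [MetricSpace X]

theorem pointedGH_eq_sInf (a b : X) : pointedGH a b =
    sInf {r | ∃ m : X → X → ℝ, IsCrossDist m ∧ r = crossHausdorff m + m a b} := by
  unfold pointedGH
  congr 1
  ext r
  constructor
  · rintro ⟨p, -, hp, hsymm, htri, hl, hr, rfl⟩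
    exact ⟨_, isCrossDist_of_pseudometric hp hsymm htri hl hr, rfl⟩
  · rintro ⟨m, hm, rfl⟩
    refine ⟨sumDist m, ?_, ?_, ?_, hm.sumDist_triangle, fun _ _ => rfl, fun _ _ => rfl, rfl⟩
    · rintro (x | y) <;> exact dist_self _
    · rintro (x | y) (x' | y') <;> first | exact dist_nonneg | exact hm.nonneg _ _
    · rintro (x | y) (x' | y') <;> first | exact dist_comm _ _ | rfl

theorem pointedGH_le {m : X → X → ℝ} (hm : IsCrossDist m) (a b : X) :
    pointedGH a b ≤ crossHausdorff m + m a b := by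
  rw [pointedGH_eq_sInf]
  refine csInf_le ⟨0, ?_⟩ ⟨m, hm, rfl⟩
  rintro _ ⟨m', hm', rfl⟩
  exact add_nonneg hm'.crossHausdorff_nonneg (hm'.nonneg a b)

theorem le_pointedGH {a b : X} {r : ℝ}
    (h : ∀ m, IsCrossDist m → r ≤ crossHausdorff m + m a b) :
    r ≤ pointedGH a b := by
  rw [pointedGH_eq_sInf]
  refine le_csInf ⟨_, _, isometry_id.isCrossDist, rfl⟩ ?_
  rintro _ ⟨m, hm, rfl⟩
  exact h m hm

theorem exists_isCrossDist_lt_of_pointedGH_lt {a b : X} {r : ℝ} (h : pointedGH a b < r) :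
    ∃ m, IsCrossDist m ∧ crossHausdorff m + m a b < r := by
  rw [pointedGH_eq_sInf] at h
  obtain ⟨_, ⟨m, hm, rfl⟩, hlt⟩ :=
    exists_lt_of_csInf_lt (by exact ⟨_, _, isometry_id.isCrossDist, rfl⟩) h
  exact ⟨m, hm, hlt⟩

theorem pointedGH_nonneg (a b : X) : 0 ≤ pointedGH a b :=
  le_pointedGH fun _ hm => add_nonneg hm.crossHausdorff_nonneg (hm.nonneg a b)

theorem pointedGH_le_dist_of_isometryEquiv (Φ : X ≃ᵢ X) (a b : X) :
    pointedGH a b ≤ dist (Φ a) b := by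
  simpa [Φ.crossHausdorff_dist_eq_zero] using pointedGH_le Φ.isometry.isCrossDist a b

theorem pointedGH_le_dist (a b : X) : pointedGH a b ≤ dist a b :=
  pointedGH_le_dist_of_isometryEquiv (IsometryEquiv.refl X) a b

theorem pointedGH_self (a : X) : pointedGH a a = 0 :=
  le_antisymm (by simpa using pointedGH_le_dist a a) (pointedGH_nonneg a a)

theorem pointedGH_comm (a b : X) : pointedGH a b = pointedGH b a := by
  have key (a b : X) : pointedGH b a ≤ pointedGH a b := le_pointedGH fun m hm =>
    (pointedGH_le hm.flip b a).trans_eq (by rw [crossHausdorff_flip]; rfl)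
  exact le_antisymm (key b a) (key a b)

variable [CompactSpace X]

theorem pointedGH_triangle (a b c : X) : pointedGH a c ≤ pointedGH a b + pointedGH b c := by
  have : Nonempty X := ⟨a⟩
  have key (m n : X → X → ℝ) (hm : IsCrossDist m) (hn : IsCrossDist n) :
      pointedGH a c ≤ (crossHausdorff m + m a b) + (crossHausdorff n + n b c) := calc
    pointedGH a c ≤ crossHausdorff (crossComp m n) + crossComp m n a c :=
      pointedGH_le (hm.crossComp hn) a c
    _ ≤ (crossHausdorff m + crossHausdorff n) + (m a b + n b c) :=
      add_le_add (hm.crossHausdorff_crossComp_le hn) (hm.crossComp_le hn a b c)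
    _ = _ := by ring
  have h : ∀ n, IsCrossDist n → pointedGH a c - (crossHausdorff n + n b c) ≤ pointedGH a b :=
    fun n hn => le_pointedGH fun m hm => by linarith [key m n hm hn]
  have := le_pointedGH (r := pointedGH a c - pointedGH a b) fun n hn => by linarith [h n hn]
  linarith

theorem exists_approx_of_pointedGH_eq_zero {a b : X} (h : pointedGH a b = 0) {ε : ℝ}
    (hε : 0 < ε) :
    ∃ f : X → X, (∀ x y, |dist (f x) (f y) - dist x y| ≤ ε) ∧ dist (f a) b ≤ ε := by
  have : Nonempty X := ⟨a⟩
  obtain ⟨m, hm, hlt⟩ := exists_isCrossDist_lt_of_pointedGH_lt (h ▸ half_pos hε)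
  have hrow (x : X) : ⨅ y, m x y < ε / 2 := by
    have : ⨆ x, ⨅ y, m x y ≤ crossHausdorff m := le_max_left _ _
    linarith [le_ciSup hm.bddAbove_range_iInf x, hm.nonneg a b]
  choose f hf using fun x => exists_lt_of_ciInf_lt (hrow x)
  refine ⟨f, fun x y => abs_sub_le_iff.2 ⟨?_, ?_⟩, ?_⟩
  · linarith [hm.dist_right_le_add x y (f x) (f y), hf x, hf y]
  · linarith [hm.dist_left_le_add x y (f x) (f y), hf x, hf y]
  · linarith [hm.dist_right_le a (f a) b, hf a, hm.crossHausdorff_nonneg]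

theorem pointedGH_eq_zero_iff {a b : X} : pointedGH a b = 0 ↔ ∃ Φ : X ≃ᵢ X, Φ a = b := by
  refine ⟨fun h => ?_, ?_⟩
  · obtain ⟨Φ, hΦ, rfl⟩ := exists_isometry_of_forall_approx fun ε hε =>
      exists_approx_of_pointedGH_eq_zero h hε
    have hsurj := hΦ.surjective_of_compactSpace_s14
    exact ⟨IsometryEquiv.mk' Φ (surjInv hsurj) (rightInverse_surjInv hsurj) hΦ, rfl⟩
  · rintro ⟨Φ, rfl⟩
    exact le_antisymm (by simpa using pointedGH_le_dist_of_isometryEquiv Φ a (Φ a))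
      (pointedGH_nonneg a (Φ a))

end PointedGH

theorem pointedGH_pseudometric_general {X : Type*} [MetricSpace X] [CompactSpace X] :
    (∀ a : X, pointedGH a a = 0) ∧
    (∀ a b : X, 0 ≤ pointedGH a b) ∧
    (∀ a b : X, pointedGH a b = pointedGH b a) ∧
    (∀ a b c : X, pointedGH a c ≤ pointedGH a b + pointedGH b c) ∧
    (∀ a b : X, pointedGH a b ≤ dist a b) ∧
    (∀ a b : X, pointedGH a b = 0 ↔ ∃ Φ : X ≃ᵢ X, Φ a = b) :=
  ⟨pointedGH_self, pointedGH_nonneg, pointedGH_comm, pointedGH_triangle, pointedGH_le_dist,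
    fun _ _ => pointedGH_eq_zero_iff⟩

/-- For a compact metric space X, ϱ is a pseudometric on X satisfying
ϱ ≤ d, and ϱ(a,b) = 0 if and only if some surjective isometry of X sends a to b. -/
theorem pointedGH_pseudometric {X : Type*} [MetricSpace X] [CompactSpace X]
    [Nonempty X] :
    (∀ a : X, pointedGH a a = 0) ∧
    (∀ a b : X, 0 ≤ pointedGH a b) ∧
    (∀ a b : X, pointedGH a b = pointedGH b a) ∧
    (∀ a b c : X, pointedGH a c ≤ pointedGH a b + pointedGH b c) ∧
    (∀ a b : X, pointedGH a b ≤ dist a b) ∧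
    (∀ a b : X, pointedGH a b = 0 ↔ ∃ Φ : X ≃ᵢ X, Φ a = b) :=
  pointedGH_pseudometric_general
end

section
/- Let X = [a,b] ⊂ ℝ with the Euclidean metric. Then the quotient space X^{(1)} of X by its isometry group, equipped with the greatest quotient metric d^{(1)}, is isometric to the interval [a/2, b/2]. -/
/-- Any self-isometry of `[a,b]` preserves the distance to the midpoint. -/
theorem isometry_Icc_abs_mid {a b : ℝ} (hab : a ≤ b)
    (Φ : Set.Icc a b ≃ᵢ Set.Icc a b) (z : Set.Icc a b) :
    |(Φ z).1 - (a + b) / 2| = |z.1 - (a + b) / 2| := by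
  have ha' : a ∈ Set.Icc a b := ⟨le_refl a, hab⟩
  have hb' : b ∈ Set.Icc a b := ⟨hab, le_refl b⟩
  set A : Set.Icc a b := ⟨a, ha'⟩
  set B : Set.Icc a b := ⟨b, hb'⟩
  have hAB : |(Φ A).1 - (Φ B).1| = b - a := by
    have h := Φ.dist_eq A B
    rw [Subtype.dist_eq, Subtype.dist_eq, Real.dist_eq, Real.dist_eq] at h
    rw [h, abs_of_nonpos (by linarith)]; ring
  have hzA : |(Φ z).1 - (Φ A).1| = z.1 - a := by
    have h := Φ.dist_eq z A
    rw [Subtype.dist_eq, Subtype.dist_eq, Real.dist_eq, Real.dist_eq] at h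
    rw [h, abs_of_nonneg (by linarith [z.2.1])]
  obtain ⟨hu1, hu2⟩ := (Φ A).2
  obtain ⟨hv1, hv2⟩ := (Φ B).2
  obtain ⟨hw1, hw2⟩ := (Φ z).2
  have hz1 := z.2.1
  have hz2 := z.2.2
  rcases abs_cases ((Φ A).1 - (Φ B).1) with ⟨he, _⟩ | ⟨he, _⟩ <;> rw [he] at hAB
  · -- Φ A = b, Φ B = a : reflection
    have hua : (Φ A).1 = b := by linarith
    rw [hua] at hzA
    have hwb : (Φ z).1 - b ≤ 0 := by linarith
    rw [abs_of_nonpos hwb] at hzA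
    have : (Φ z).1 - (a + b) / 2 = -(z.1 - (a + b) / 2) := by linarith
    rw [this, abs_neg]
  · -- Φ A = a, Φ B = b : identity
    have hua : (Φ A).1 = a := by linarith
    rw [hua] at hzA
    have hwa : 0 ≤ (Φ z).1 - a := by linarith
    rw [abs_of_nonneg hwa] at hzA
    have : (Φ z).1 = z.1 := by linarith
    rw [this]

/-- For X = [a,b] ⊂ ℝ with the Euclidean metric, the quotient X⁽¹⁾ of X
by its isometry group, with the greatest quotient metric d⁽¹⁾, is isometric to the
interval [a/2, b/2]: there is a surjection f : [a,b] → [a/2,b/2] identifying exactly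
the points in a common orbit and carrying d⁽¹⁾ to the Euclidean distance. -/
theorem quotient_Icc_isometric_half {a b : ℝ} (hab : a ≤ b) :
    ∃ f : Set.Icc a b → Set.Icc (a / 2) (b / 2),
      Function.Surjective f ∧
      (∀ x y : Set.Icc a b, dist (f x) (f y) = orbitDist x y) ∧
      (∀ x y : Set.Icc a b,
        f x = f y ↔ ∃ Φ : Set.Icc a b ≃ᵢ Set.Icc a b, Φ x = y) := by
  set m : ℝ := (a + b) / 2 with hm
  have habs : ∀ z : Set.Icc a b, |z.1 - m| ≤ (b - a) / 2 := by
    intro z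
    rw [abs_le]
    constructor <;> [skip; skip] <;> simp only [hm] <;> linarith [z.2.1, z.2.2]
  -- the reflection isometry
  have hmem : ∀ z : Set.Icc a b, a + b - z.1 ∈ Set.Icc a b := by
    intro z
    exact ⟨by linarith [z.2.2], by linarith [z.2.1]⟩
  let Φr : Set.Icc a b ≃ᵢ Set.Icc a b :=
    { toFun := fun z => ⟨a + b - z.1, hmem z⟩
      invFun := fun z => ⟨a + b - z.1, hmem z⟩
      left_inv := fun z => by ext; simp
      right_inv := fun z => by ext; simp
      isometry_toFun := Isometry.of_dist_eq (fun p q => by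
        rw [Subtype.dist_eq, Subtype.dist_eq, Real.dist_eq, Real.dist_eq]
        have : a + b - p.1 - (a + b - q.1) = -(p.1 - q.1) := by ring
        rw [this, abs_neg]) }
  have hΦr : ∀ z : Set.Icc a b, ((Φr z) : ℝ) = a + b - z.1 := fun z => rfl
  -- value of orbitDist
  have main : ∀ x y : Set.Icc a b, orbitDist x y = |(|x.1 - m| - |y.1 - m|)| := by
    intro x y
    have hub : ∀ r ∈ {r : ℝ | ∃ f : Set.Icc a b → ℝ, LipschitzWith 1 f ∧
        (∀ (Φ : Set.Icc a b ≃ᵢ Set.Icc a b) (c : Set.Icc a b), f (Φ c) = f c) ∧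
        r = |f x - f y|}, r ≤ |(|x.1 - m| - |y.1 - m|)| := by
      rintro r ⟨f, hf, hinv, rfl⟩
      have hmem' : ∀ z : Set.Icc a b, m + |z.1 - m| ∈ Set.Icc a b := by
        intro z
        have h1 := habs z
        have h2 := abs_nonneg (z.1 - m)
        exact ⟨by simp only [hm] at *; linarith, by simp only [hm] at *; linarith⟩
      have hfeq : ∀ z : Set.Icc a b, f ⟨m + |z.1 - m|, hmem' z⟩ = f z := by
        intro z
        rcases le_total m z.1 with h | h
        · have : (⟨m + |z.1 - m|, hmem' z⟩ : Set.Icc a b) = z := by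
            apply Subtype.ext
            show m + |z.1 - m| = z.1
            rw [abs_of_nonneg (by linarith)]; ring
          rw [this]
        · have : (⟨m + |z.1 - m|, hmem' z⟩ : Set.Icc a b) = Φr z := by
            apply Subtype.ext
            show m + |z.1 - m| = a + b - z.1
            rw [abs_of_nonpos (by linarith)]
            simp only [hm]; ring
          rw [this, hinv Φr z]
      calc |f x - f y| = |f ⟨m + |x.1 - m|, hmem' x⟩ - f ⟨m + |y.1 - m|, hmem' y⟩| := by
            rw [hfeq x, hfeq y]
        _ ≤ dist (⟨m + |x.1 - m|, hmem' x⟩ : Set.Icc a b) ⟨m + |y.1 - m|, hmem' y⟩ := by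
            have h := hf.dist_le_mul (⟨m + |x.1 - m|, hmem' x⟩ : Set.Icc a b)
              ⟨m + |y.1 - m|, hmem' y⟩
            rw [Real.dist_eq] at h
            simpa using h
        _ = |(|x.1 - m| - |y.1 - m|)| := by
            rw [Subtype.dist_eq, Real.dist_eq]
            congr 1; ring
    have hmemD : |(|x.1 - m| - |y.1 - m|)| ∈ {r : ℝ | ∃ f : Set.Icc a b → ℝ,
        LipschitzWith 1 f ∧
        (∀ (Φ : Set.Icc a b ≃ᵢ Set.Icc a b) (c : Set.Icc a b), f (Φ c) = f c) ∧
        r = |f x - f y|} := by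
      refine ⟨fun z => |z.1 - m|, ?_, ?_, rfl⟩
      · apply LipschitzWith.of_dist_le_mul
        intro p q
        rw [Subtype.dist_eq, Real.dist_eq, Real.dist_eq, NNReal.coe_one, one_mul]
        have := abs_abs_sub_abs_le_abs_sub (p.1 - m) (q.1 - m)
        have heq : p.1 - m - (q.1 - m) = p.1 - q.1 := by ring
        rwa [heq] at this
      · intro Φ c
        exact isometry_Icc_abs_mid hab Φ c
    unfold orbitDist
    apply le_antisymm
    · exact Real.sSup_le hub (abs_nonneg _)
    · exact le_csSup ⟨_, hub⟩ hmemD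
  -- the map
  have hfmem : ∀ x : Set.Icc a b, a / 2 + |x.1 - m| ∈ Set.Icc (a / 2) (b / 2) := by
    intro x
    have h1 := habs x
    have h2 := abs_nonneg (x.1 - m)
    exact ⟨by linarith, by linarith⟩
  refine ⟨fun x => ⟨a / 2 + |x.1 - m|, hfmem x⟩, ?_, ?_, ?_⟩
  · -- surjective
    intro y
    obtain ⟨hy1, hy2⟩ := y.2
    refine ⟨⟨y.1 + b / 2, ⟨by linarith, by linarith⟩⟩, ?_⟩
    ext
    show a / 2 + |y.1 + b / 2 - m| = y.1
    rw [abs_of_nonneg (by simp only [hm]; linarith)]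
    simp only [hm]; ring
  · -- distance
    intro x y
    rw [main x y, Subtype.dist_eq, Real.dist_eq]
    congr 1; ring
  · -- orbit identification
    intro x y
    constructor
    · intro h
      have h' : a / 2 + |x.1 - m| = a / 2 + |y.1 - m| := congrArg Subtype.val h
      have habs' : |x.1 - m| = |y.1 - m| := by linarith
      rcases abs_eq_abs.1 habs' with h'' | h''
      · exact ⟨IsometryEquiv.refl _, Subtype.ext (show (x:ℝ) = (y:ℝ) by linarith)⟩
      · refine ⟨Φr, Subtype.ext ?_⟩
        rw [hΦr]
        simp only [hm] at h''
        linarith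
    · rintro ⟨Φ, rfl⟩
      ext
      show a / 2 + |x.1 - m| = a / 2 + |(Φ x).1 - m|
      rw [isometry_Icc_abs_mid hab Φ x]
end
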